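/- Let n > 2, let c ∈ ℝ^n with c_n = 0, let R > 0, and let ι = ι_{c,R} be inversion in the sphere of center c and radius R. Then ι maps the upper half space R^{n,+} into itself, and for every C² function φ on an open set U ⊆ R^{n,+} and every v ∈ R^{n,+} with ι(v) ∈ U: Δ(φ∘ι)(v) − ((n−2)/v_n) ∂(φ∘ι)/∂v_n(v) = (R²/‖v−c‖²)² · [ Δφ(ι(v)) − ((n−2)/ι(v)_n) ∂φ/∂x_n(ι(v)) ]. In particular, if φ is hyperbolic harmonic on U then φ∘ι is hyperbolic harmonic on ι^{−1}(U) ∩ R^{n,+}. -/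

import Mathlib

noncomputable section

open MeasureTheory

def lastIdx (n : ℕ) [NeZero n] : Fin n := ⟨n - 1, Nat.sub_lt (Nat.pos_of_neZero n) Nat.one_pos⟩

def upperHalf (n : ℕ) [NeZero n] : Set (EuclideanSpace ℝ (Fin n)) :=
  {x | 0 < x (lastIdx n)}

def reflect {n : ℕ} [NeZero n] (x : EuclideanSpace ℝ (Fin n)) : EuclideanSpace ℝ (Fin n) :=
  WithLp.toLp 2 (fun i => if i = lastIdx n then -(x i) else x i)

def pderiv' {n : ℕ} (u : EuclideanSpace ℝ (Fin n) → ℝ) (i : Fin n)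
    (x : EuclideanSpace ℝ (Fin n)) : ℝ :=
  fderiv ℝ u x (EuclideanSpace.single i 1)

def lap {n : ℕ} (u : EuclideanSpace ℝ (Fin n) → ℝ) (x : EuclideanSpace ℝ (Fin n)) : ℝ :=
  ∑ i, pderiv' (pderiv' u i) i x

def G {n : ℕ} [NeZero n] (x y : EuclideanSpace ℝ (Fin n)) : ℝ :=
  ∫ t in (‖x - y‖ / ‖x - reflect y‖)..1, (1 - t^2)^(n-2) / t^(n-1)

def Hker {n : ℕ} [NeZero n] (x y : EuclideanSpace ℝ (Fin n)) : ℝ :=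
  1 / (((n : ℝ) - 2) * ‖x - y‖^(n-2) * ‖x - reflect y‖^(n-2))

def sphInv {n : ℕ} (c : EuclideanSpace ℝ (Fin n)) (R : ℝ) (x : EuclideanSpace ℝ (Fin n)) :
    EuclideanSpace ℝ (Fin n) := c + (R^2 / ‖x - c‖^2) • (x - c)

def emb (n : ℕ) (x : EuclideanSpace ℝ (Fin (n-1))) : EuclideanSpace ℝ (Fin n) :=
  WithLp.toLp 2 (fun i : Fin n => if h : (i : ℕ) < n - 1 then x ⟨i, h⟩ else 0)

def sphereArea (n : ℕ) : ℝ :=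
  (n : ℝ) * (volume (Metric.ball (0 : EuclideanSpace ℝ (Fin n)) 1)).toReal


section Aux
open ContinuousLinearMap
variable {n : ℕ} [NeZero n]
local notation "E" => EuclideanSpace ℝ (Fin n)

def aD (c : E) (R : ℝ) (w : E) : E →L[ℝ] ℝ :=
  R^2 • (((1 : ℝ →L[ℝ] ℝ).smulRight (-((‖w-c‖^2)^2)⁻¹)).comp
    (2 • (innerSL ℝ (w-c)).comp (ContinuousLinearMap.id ℝ E)))

def Aclm (c : E) (R : ℝ) (w : E) : E →L[ℝ] E :=
  (R^2 * (‖w-c‖^2)⁻¹) • ContinuousLinearMap.id ℝ E + (aD c R w).smulRight (w - c)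

theorem hasFDerivAt_sphInv (c : E) (R : ℝ) {w₀ : E} (hw : w₀ ≠ c) :
    HasFDerivAt (sphInv c R) (Aclm c R w₀) w₀ := by
  have hne : ‖w₀ - c‖^2 ≠ 0 := by
    have h0 : w₀ - c ≠ 0 := sub_ne_zero.mpr hw
    simpa using h0
  have h1 : HasFDerivAt (fun w : E => w - c) (ContinuousLinearMap.id ℝ E) w₀ := by
    simpa using (hasFDerivAt_id w₀).sub_const c
  have hq : HasFDerivAt (fun w : E => ‖w - c‖^2)
      (2 • (innerSL ℝ (w₀ - c)).comp (ContinuousLinearMap.id ℝ E)) w₀ := h1.norm_sq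
  have h3 : HasFDerivAt (fun w : E => (‖w - c‖^2)⁻¹)
      (((1 : ℝ →L[ℝ] ℝ).smulRight (-((‖w₀-c‖^2)^2)⁻¹)).comp
        (2 • (innerSL ℝ (w₀-c)).comp (ContinuousLinearMap.id ℝ E))) w₀ :=
    (hasFDerivAt_inv hne).comp w₀ hq
  have h4 := h3.const_mul (R^2)
  have h5 := (h4.smul h1).const_add c
  have : sphInv c R = fun w : E => c + (R^2 * (‖w-c‖^2)⁻¹) • (w - c) := by
    funext w; simp [sphInv, div_eq_mul_inv]
  rw [this]
  exact h5

theorem Aclm_apply (c : E) (R : ℝ) (w z : E) :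
    Aclm c R w z = (R^2 * (‖w-c‖^2)⁻¹) • z
      + (-2*R^2 * (inner ℝ (w-c) z : ℝ) * ((‖w-c‖^2)^2)⁻¹) • (w-c) := by
  simp only [Aclm, aD, ContinuousLinearMap.add_apply, ContinuousLinearMap.smulRight_apply,
    ContinuousLinearMap.smul_apply, ContinuousLinearMap.comp_apply, ContinuousLinearMap.coe_id',
    id_eq, ContinuousLinearMap.one_apply, innerSL_apply_apply, smul_eq_mul]
  match_scalars <;> ring

local notation "e" i => EuclideanSpace.single i (1:ℝ)

theorem esum (x : E) : ∑ i, x i • (EuclideanSpace.single i (1:ℝ)) = x := by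
  refine PiLp.ext fun j => ?_
  classical
  have : (∑ i, x i • (EuclideanSpace.single i (1:ℝ))) j
      = ∑ i, (x i • (EuclideanSpace.single i (1:ℝ))) j := by
    induction (Finset.univ : Finset (Fin n)) using Finset.induction_on with
    | empty => simp
    | insert a s h ih => simp_all [Finset.sum_insert h]
  rw [this]
  simp [EuclideanSpace.single_apply, PiLp.smul_apply, mul_ite, Finset.sum_ite_eq]

theorem sum_sq (x : E) : ∑ i, x i * x i = ‖x‖^2 := by
  rw [EuclideanSpace.norm_eq, Real.sq_sqrt (by positivity)]
  exact Finset.sum_congr rfl fun i _ => by rw [Real.norm_eq_abs, sq_abs, sq]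

theorem B1 (T : E →L[ℝ] ℝ) (x : E) : ∑ i, x i * T (EuclideanSpace.single i (1:ℝ)) = T x := by
  conv_rhs => rw [← esum x]
  rw [map_sum]
  simp [smul_eq_mul]

theorem Mi_exists (c : E) (R : ℝ) {v : E} (hv : v ≠ c) (i : Fin n) :
    ∃ M : E →L[ℝ] E, HasFDerivAt (fun w => Aclm c R w (EuclideanSpace.single i 1)) M v ∧
      M (EuclideanSpace.single i 1) =
        (-4*R^2 * ((v-c) i) * ((‖v-c‖^2)^2)⁻¹) • (EuclideanSpace.single i (1:ℝ))
        + (8*R^2 * ((v-c) i)^2 * ((‖v-c‖^2)^3)⁻¹ - 2*R^2 * ((‖v-c‖^2)^2)⁻¹) • (v - c) := by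
  have h0 : v - c ≠ 0 := sub_ne_zero.mpr hv
  have hnv : ‖v - c‖ ≠ 0 := by simpa using h0
  have hne : ‖v - c‖^2 ≠ 0 := pow_ne_zero 2 hnv
  have hsub : HasFDerivAt (fun w : E => w - c) (ContinuousLinearMap.id ℝ E) v := by
    simpa using (hasFDerivAt_id v).sub_const c
  have hq : HasFDerivAt (fun w : E => ‖w - c‖^2)
      (2 • (innerSL ℝ (v - c)).comp (ContinuousLinearMap.id ℝ E)) v := hsub.norm_sq
  have ha : HasFDerivAt (fun w : E => R^2 * (‖w-c‖^2)⁻¹) (aD c R v) v :=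
    ((hasFDerivAt_inv hne).comp v hq).const_mul (R^2)
  have hp : HasFDerivAt (fun w : E => (w - c) i)
      ((EuclideanSpace.proj (𝕜 := ℝ) i).comp (ContinuousLinearMap.id ℝ E)) v :=
    (EuclideanSpace.proj (𝕜 := ℝ) i).hasFDerivAt.comp v hsub
  have hc2 := hp.const_mul (-2*R^2)
  have hqsq' := hq.mul hq
  rw [show ((fun w : E => ‖w-c‖^2) * fun w : E => ‖w-c‖^2) = fun w : E => (‖w-c‖^2)^2 from
    funext fun w => (pow_two _).symm] at hqsq'
  have hinv := (hasFDerivAt_inv (pow_ne_zero 2 hne)).comp v hqsq'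
  have hb := hc2.mul hinv
  have hGi := (ha.smul_const (EuclideanSpace.single i (1:ℝ))).add (hb.smul hsub)
  have hfun : (fun w => Aclm c R w (EuclideanSpace.single i 1))
      = fun w : E => (R^2 * (‖w-c‖^2)⁻¹) • (EuclideanSpace.single i (1:ℝ))
        + ((-2*R^2 * ((w - c) i)) * ((‖w-c‖^2)^2)⁻¹) • (w - c) := by
    funext w
    rw [Aclm_apply]
    have : (inner ℝ (w - c) (EuclideanSpace.single i (1:ℝ)) : ℝ) = (w - c) i := by
      simp [EuclideanSpace.inner_single_right]
    rw [this]
  rw [hfun]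
  refine ⟨_, hGi, ?_⟩
  simp only [ContinuousLinearMap.add_apply, ContinuousLinearMap.smulRight_apply,
    ContinuousLinearMap.smul_apply, ContinuousLinearMap.comp_apply, ContinuousLinearMap.coe_id',
    id_eq, ContinuousLinearMap.one_apply, innerSL_apply_apply, smul_eq_mul, aD,
    PiLp.proj_apply, EuclideanSpace.inner_single_right, conj_trivial,
    Function.comp_apply, Pi.mul_apply, ContinuousLinearMap.toSpanSingleton_apply, EuclideanSpace.single_apply, if_true]
  match_scalars <;> field_simp <;> ring

set_option maxHeartbeats 2000000 in
theorem key (hn : 2 < n) {c : E} (hc : c (lastIdx n) = 0) {R : ℝ} (hR : 0 < R)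
    {U : Set E} (hU : IsOpen U) {φ : E → ℝ} (hφ : ContDiffOn ℝ 2 φ U)
    {v : E} (hv0 : 0 < v (lastIdx n)) (hιv : sphInv c R v ∈ U) :
    lap (fun w => φ (sphInv c R w)) v
      - (((n : ℝ) - 2) / v (lastIdx n)) * pderiv' (fun w => φ (sphInv c R w)) (lastIdx n) v
    = (R^2 / ‖v - c‖^2)^2 *
      (lap φ (sphInv c R v)
        - (((n : ℝ) - 2) / (sphInv c R v) (lastIdx n)) * pderiv' φ (lastIdx n) (sphInv c R v)) := by
  classical
  set N := lastIdx n with hN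
  have hvc : v ≠ c := by
    intro h; rw [h, hc] at hv0; exact lt_irrefl 0 hv0
  have h0 : v - c ≠ 0 := sub_ne_zero.mpr hvc
  have hnv : ‖v - c‖ ≠ 0 := by simpa using h0
  have hne : ‖v - c‖ ^ 2 ≠ 0 := pow_ne_zero 2 hnv
  have hrpos : 0 < ‖v - c‖ ^ 2 := by positivity
  set r : ℝ := ‖v - c‖ ^ 2 with hr
  set lam : ℝ := R ^ 2 * r⁻¹ with hlam
  set kap : ℝ := -2 * R ^ 2 * (r ^ 2)⁻¹ with hkap
  set wv : E := v - c with hwv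
  set u : E → ℝ := fun w => φ (sphInv c R w) with hu
  -- differentiability data
  have hφat : ContDiffAt ℝ 2 φ (sphInv c R v) := hφ.contDiffAt (hU.mem_nhds hιv)
  have hD2at : DifferentiableAt ℝ (fderiv ℝ φ) (sphInv c R v) :=
    (hφat.fderiv_right (m := 1) (by norm_num)).differentiableAt one_ne_zero
  set Dφ : E →L[ℝ] ℝ := fderiv ℝ φ (sphInv c R v) with hDφ
  set D2 : E →L[ℝ] E →L[ℝ] ℝ := fderiv ℝ (fderiv ℝ φ) (sphInv c R v) with hD2
  have hF : HasFDerivAt (fun w => fderiv ℝ φ (sphInv c R w)) (D2.comp (Aclm c R v)) v :=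
    hD2at.hasFDerivAt.comp v (hasFDerivAt_sphInv c R hvc)
  -- chain rule near v
  have hdiffφ : ∀ x ∈ U, DifferentiableAt ℝ φ x := fun x hx =>
    (hφ.differentiableOn (by norm_num)).differentiableAt (hU.mem_nhds hx)
  have hchain : ∀ w, w ≠ c → sphInv c R w ∈ U →
      fderiv ℝ u w = (fderiv ℝ φ (sphInv c R w)).comp (Aclm c R w) := fun w hw1 hw2 =>
    (((hdiffφ _ hw2).hasFDerivAt).comp w (hasFDerivAt_sphInv c R hw1)).fderiv
  have hEvmem : ∀ᶠ w in nhds v, w ≠ c ∧ sphInv c R w ∈ U := by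
    have h1 : ∀ᶠ w in nhds v, w ≠ c := eventually_ne_nhds hvc
    have h2 : ∀ᶠ w in nhds v, sphInv c R w ∈ U :=
      ((hasFDerivAt_sphInv c R hvc).continuousAt).eventually_mem (hU.mem_nhds hιv)
    exact h1.and h2
  -- second derivatives of u
  have hiEq : ∀ i : Fin n,
      pderiv' (pderiv' u i) i v
        = lam ^ 2 * (D2 (EuclideanSpace.single i 1) (EuclideanSpace.single i 1))
          + (lam * kap) * (wv i * D2 (EuclideanSpace.single i 1) wv)
          + (lam * kap) * (wv i * D2 wv (EuclideanSpace.single i 1))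
          + (kap ^ 2 * (D2 wv wv)) * (wv i * wv i)
          + (-4 * R ^ 2 * (r ^ 2)⁻¹) * (wv i * Dφ (EuclideanSpace.single i 1))
          + (8 * R ^ 2 * (r ^ 3)⁻¹ * Dφ wv) * (wv i * wv i)
          + (-2 * R ^ 2 * (r ^ 2)⁻¹ * Dφ wv) := by
    intro i
    obtain ⟨M, hM, hMval⟩ := Mi_exists c R hvc i
    have hEv : (pderiv' u i) =ᶠ[nhds v]
        fun w => (fderiv ℝ φ (sphInv c R w)) (Aclm c R w (EuclideanSpace.single i 1)) := by
      filter_upwards [hEvmem] with w hw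
      show fderiv ℝ u w (EuclideanSpace.single i 1) = _
      rw [hchain w hw.1 hw.2]; rfl
    have hbig := hF.clm_apply hM
    have step1 : pderiv' (pderiv' u i) i v
        = Dφ (M (EuclideanSpace.single i 1))
          + D2 (Aclm c R v (EuclideanSpace.single i 1))
              (Aclm c R v (EuclideanSpace.single i 1)) := by
      show fderiv ℝ (pderiv' u i) v (EuclideanSpace.single i 1) = _
      rw [hEv.fderiv_eq, hbig.fderiv]
      simp
      rfl
    rw [step1, hMval, Aclm_apply]
    have hin : (inner ℝ (v - c) (EuclideanSpace.single i (1:ℝ)) : ℝ) = (v - c) i := by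
      simp [EuclideanSpace.inner_single_right]
    rw [hin]
    simp only [map_add, _root_.map_smul, ContinuousLinearMap.add_apply,
      ContinuousLinearMap.smul_apply, smul_eq_mul, ← hwv, ← hr]
    rw [hlam, hkap]
    ring
  -- the sum over i
  have hlapu : lap u v
      = lam ^ 2 * (∑ k, D2 (EuclideanSpace.single k 1) (EuclideanSpace.single k 1))
        + (lam * kap) * (D2 wv wv) + (lam * kap) * (D2 wv wv)
        + (kap ^ 2 * (D2 wv wv)) * r
        + (-4 * R ^ 2 * (r ^ 2)⁻¹) * (Dφ wv)
        + (8 * R ^ 2 * (r ^ 3)⁻¹ * Dφ wv) * r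
        + (n : ℝ) * (-2 * R ^ 2 * (r ^ 2)⁻¹ * Dφ wv) := by
    show (∑ i, pderiv' (pderiv' u i) i v) = _
    rw [Finset.sum_congr rfl fun i _ => hiEq i]
    simp only [Finset.sum_add_distrib, ← Finset.mul_sum, Finset.sum_const,
      Finset.card_univ, Fintype.card_fin, nsmul_eq_mul]
    rw [B1 Dφ wv, sum_sq wv, ← hr]
    have hY : ∑ i, wv i * D2 (EuclideanSpace.single i 1) wv = D2 wv wv := by
      simpa using B1 (D2.flip wv) wv
    have hZ : ∑ i, wv i * D2 wv (EuclideanSpace.single i 1) = D2 wv wv := B1 (D2 wv) wv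
    rw [hY, hZ]
    ring
  -- first derivative of u in direction N
  have hfirst : pderiv' u N v = lam * Dφ (EuclideanSpace.single N 1) + kap * wv N * Dφ wv := by
    show fderiv ℝ u v (EuclideanSpace.single N 1) = _
    rw [hchain v hvc hιv]
    show Dφ (Aclm c R v (EuclideanSpace.single N 1)) = _
    rw [Aclm_apply]
    have hin : (inner ℝ (v - c) (EuclideanSpace.single N (1:ℝ)) : ℝ) = (v - c) N := by
      simp [EuclideanSpace.inner_single_right]
    rw [hin]
    simp only [map_add, _root_.map_smul, smul_eq_mul, ← hwv, ← hr]
    rw [hlam, hkap]; ring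
  -- lap φ at the image point
  have hlapφ : lap φ (sphInv c R v)
      = ∑ k, D2 (EuclideanSpace.single k 1) (EuclideanSpace.single k 1) := by
    refine Finset.sum_congr rfl fun k _ => ?_
    have hh := hD2at.hasFDerivAt.clm_apply
      (hasFDerivAt_const (EuclideanSpace.single k (1:ℝ)) (sphInv c R v))
    show fderiv ℝ (fun y => fderiv ℝ φ y (EuclideanSpace.single k 1)) (sphInv c R v)
        (EuclideanSpace.single k 1) = _
    rw [hh.fderiv]
    simp
    rfl
  -- coordinate facts
  have hwN : wv N = v N := by
    rw [hwv]; show v N - c N = v N; rw [hc]; ring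
  have hιN : (sphInv c R v) N = lam * v N := by
    show (c + (R^2 / ‖v - c‖^2) • (v - c)) N = _
    have : (c + (R^2 / ‖v - c‖^2) • (v - c)) N
        = c N + (R^2 / ‖v - c‖^2) * (v N - c N) := rfl
    rw [this, hc, hlam, ← hwv, ← hr, div_eq_mul_inv]; ring
  have hvN : v N ≠ 0 := ne_of_gt hv0
  have hpd : pderiv' φ N (sphInv c R v) = Dφ (EuclideanSpace.single N 1) := rfl
  -- final algebra
  rw [hlapu, hfirst, hlapφ, hpd, hιN, hwN]
  set L : ℝ := ∑ k, D2 (EuclideanSpace.single k 1) (EuclideanSpace.single k 1)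
  set W : ℝ := D2 wv wv
  set Y : ℝ := Dφ wv
  set Z : ℝ := Dφ (EuclideanSpace.single N 1)
  rw [hlam, hkap]
  have hR' : R ≠ 0 := ne_of_gt hR
  field_simp
  ring

end Aux


/-- intertwining of the hyperbolic Laplacian under inversion in a
boundary-centred sphere; in particular hyperbolic harmonicity is preserved. -/
theorem statement16 (n : ℕ) [NeZero n] (hn : 2 < n)
    (c : EuclideanSpace ℝ (Fin n)) (hc : c (lastIdx n) = 0) (R : ℝ) (hR : 0 < R) :
    (∀ v ∈ upperHalf n, sphInv c R v ∈ upperHalf n) ∧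
    (∀ U : Set (EuclideanSpace ℝ (Fin n)), IsOpen U → U ⊆ upperHalf n →
      ∀ φ : EuclideanSpace ℝ (Fin n) → ℝ, ContDiffOn ℝ 2 φ U →
      ∀ v ∈ upperHalf n, sphInv c R v ∈ U →
        lap (fun w => φ (sphInv c R w)) v
          - (((n : ℝ) - 2) / v (lastIdx n)) * pderiv' (fun w => φ (sphInv c R w)) (lastIdx n) v
        = (R^2 / ‖v - c‖^2)^2 *
          (lap φ (sphInv c R v)
            - (((n : ℝ) - 2) / (sphInv c R v) (lastIdx n)) * pderiv' φ (lastIdx n) (sphInv c R v))) ∧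
    (∀ U : Set (EuclideanSpace ℝ (Fin n)), IsOpen U → U ⊆ upperHalf n →
      ∀ φ : EuclideanSpace ℝ (Fin n) → ℝ, ContDiffOn ℝ 2 φ U →
      (∀ x ∈ U, lap φ x - (((n : ℝ) - 2) / x (lastIdx n)) * pderiv' φ (lastIdx n) x = 0) →
      ∀ v ∈ upperHalf n, sphInv c R v ∈ U →
        lap (fun w => φ (sphInv c R w)) v
          - (((n : ℝ) - 2) / v (lastIdx n)) * pderiv' (fun w => φ (sphInv c R w)) (lastIdx n) v
          = 0) := by
  have hpos : ∀ v ∈ upperHalf n, sphInv c R v ∈ upperHalf n := by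
    intro v hv
    have hv0 : 0 < v (lastIdx n) := hv
    have hvc : v ≠ c := by
      intro h; rw [h, hc] at hv0; exact lt_irrefl 0 hv0
    have h0 : v - c ≠ 0 := sub_ne_zero.mpr hvc
    have hnv : ‖v - c‖ ≠ 0 := by simpa using h0
    show 0 < sphInv c R v (lastIdx n)
    have heq : sphInv c R v (lastIdx n)
        = c (lastIdx n) + (R^2 / ‖v - c‖^2) * (v (lastIdx n) - c (lastIdx n)) := rfl
    rw [heq, hc]
    have : 0 < R^2 / ‖v - c‖^2 := by positivity
    simpa using mul_pos this hv0
  refine ⟨hpos, ?_, ?_⟩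
  · intro U hU hUsub φ hφ v hv hιv
    exact key hn hc hR hU hφ hv hιv
  · intro U hU hUsub φ hφ hharm v hv hιv
    rw [key hn hc hR hU hφ hv hιv, hharm (sphInv c R v) hιv, mul_zero]
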